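/- For any graded ring S = ⊕_{j≥0} S_j with S_0 a field, any constants A, B, and any collection g_1,...,g_s of homogeneous elements of positive degree ≤ d, there exists a tower G of homogeneous elements of degrees among 1,...,d such that I(g_1,...,g_s) ⊆ I(G), G is (A,B,t)-regular, and |G| ≤ C(s+t)^D for constants C, D depending only on A, B, d. -/

import Mathlib

/-!
Put each `gⱼ` into the layer of its degree. While some layer `i` is not regular, a nonzero
combination `f` of it satisfies `f + q = ∑ gₘhₘ` with `q` in the ideal of the lower layers and at
most `R = A(mᵢ + ⋯ + m_d + t)^B` products; comparing homogeneous components, the factors of degree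
`< deg f` already generate `f + q`. Trading an element of layer `i` with nonzero coefficient in `f`
for these factors does not shrink the ideal, and strictly lowers a potential (the paper's recursion
for the `nᵢ`) that dominates the total size and is polynomial in the initial sizes. So the process
stops, at a regular tower of polynomial size.
-/

/-- Rank in a graded ring: `f` is a sum of `r` products of homogeneous elements of
positive degree. -/
def GRankLE {k S : Type*} [Field k] [CommRing S] [Algebra k S]
    (𝒜 : ℕ → Submodule k S) (f : S) (r : ℕ) : Prop :=
  ∃ g h : Fin r → S,
    (∀ i, ∃ a : ℕ, 0 < a ∧ g i ∈ 𝒜 a) ∧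
    (∀ i, ∃ b : ℕ, 0 < b ∧ h i ∈ 𝒜 b) ∧
    f = ∑ i, g i * h i

/-- Relative rank at most `r` on the ideal `I`, for `f` of degree `e`. -/
def GRankRelLE {k S : Type*} [Field k] [CommRing S] [Algebra k S]
    (𝒜 : ℕ → Submodule k S) (I : Ideal S) (f : S) (e r : ℕ) : Prop :=
  ∃ q ∈ I, q ∈ 𝒜 e ∧ GRankLE 𝒜 (f + q) r

/-- A tower in a graded ring, with layers `G i` of size `sz i` of common degree
`degs i`, is `(A,B,t)`-regular: every nonzero linear combination of a layer has
relative rank `> A·(mᵢ + ⋯ + m_h + t)^B` on the ideal generated by earlier layers. -/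
def GTowerRegular {k S : Type*} [Field k] [CommRing S] [Algebra k S]
    (𝒜 : ℕ → Submodule k S) {h : ℕ} (degs sz : Fin h → ℕ)
    (G : (i : Fin h) → Fin (sz i) → S) (A B t : ℕ) : Prop :=
  ∀ i : Fin h, ∀ a : Fin (sz i) → k, a ≠ 0 →
    ¬ GRankRelLE 𝒜 (Ideal.span {p | ∃ (i' : Fin h) (j : Fin (sz i')), i' < i ∧ p = G i' j})
      (∑ j, algebraMap k S (a j) * G i j) (degs i)
      (A * ((∑ i' ∈ Finset.univ.filter (fun i' => i ≤ i'), sz i') + t) ^ B)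

open Finset

def potStep (W : ℕ → ℕ) (st : ℕ × ℕ) (m : ℕ) : ℕ × ℕ :=
  (st.1 + (m + st.1) * W (st.2 + (m + st.1)), st.2 + (m + st.1))

/-- The potential of a tower with layer sizes `m`, computed from the top layer down. In the state
`(b, T)`, `b` bounds what the layers above can still push into a lower layer, so `n = m c + b` bounds
the sizes layer `c` can reach (the paper's `n_c`); `T` sums these bounds, and each of the `n` possible
removals from layer `c` adds at most `W T` to `b`. -/
def pot (W : ℕ → ℕ) : {d : ℕ} → (Fin d → ℕ) → ℕ × ℕ
  | 0, _ => (0, 0)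
  | _ + 1, m => potStep W (pot W (Fin.tail m)) (m 0)

section Potential

variable {W : ℕ → ℕ}

lemma pot_succ {d : ℕ} (m : Fin (d + 1) → ℕ) : pot W m = potStep W (pot W (Fin.tail m)) (m 0) :=
  rfl

lemma sum_le_pot_snd {d : ℕ} (m : Fin d → ℕ) : ∑ c, m c ≤ (pot W m).2 := by
  induction d with
  | zero => simp
  | succ d ih =>
    have := ih (Fin.tail m)
    rw [Fin.sum_univ_succ, pot_succ, potStep]
    simp only [Fin.tail] at this
    omega

lemma sum_filter_succ_le_eq_sum_tail {d : ℕ} (m : Fin (d + 1) → ℕ) (i : Fin d) :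
    ∑ c ∈ univ.filter (fun c => i.succ ≤ c), m c =
      ∑ c ∈ univ.filter (fun c => i ≤ c), Fin.tail m c := by
  simp [Finset.sum_filter, Fin.sum_univ_succ, Fin.tail]

/-- Removing one element from layer `i` frees `W (∑_{c ≥ i} m c)` in the first component; each of
the `i` lower layers, growing by at most `R`, uses up at most `R` of it. -/
lemma pot_fst_add_le_and_snd_lt (hW : Monotone W) {d : ℕ} (m m' : Fin d → ℕ) (i : Fin d)
    (R K : ℕ) (hi : m' i + 1 = m i) (hup : ∀ c, i < c → m' c = m c)
    (hdown : ∀ c, c < i → m' c ≤ m c + R)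
    (hK : K + i * R ≤ W (∑ c ∈ univ.filter (fun c => i ≤ c), m c)) :
    (pot W m').1 + K ≤ (pot W m).1 ∧ (pot W m').2 < (pot W m).2 := by
  induction d generalizing K with
  | zero => exact i.elim0
  | succ d ih =>
    cases i using Fin.cases with
    | zero =>
      have htail : Fin.tail m' = Fin.tail m := funext fun c => hup c.succ c.succ_pos
      have hsum := sum_le_pot_snd (W := W) (Fin.tail m)
      simp only [Fin.val_zero, zero_mul, add_zero, Fin.zero_le, filter_true, Fin.sum_univ_succ]
        at hK
      simp only [Fin.tail] at hsum
      rw [pot_succ, pot_succ, htail, potStep, potStep]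
      set st := pot W (Fin.tail m)
      obtain ⟨n, hn, hn'⟩ : ∃ n, m 0 + st.1 = n + 1 ∧ m' 0 + st.1 = n := ⟨_, by omega, rfl⟩
      rw [hn, hn']
      have hK' : K ≤ W (st.2 + (n + 1)) := hK.trans (hW (by omega))
      have hWn : n * W (st.2 + n) ≤ n * W (st.2 + (n + 1)) := Nat.mul_le_mul_left n (hW (by omega))
      constructor
      · nlinarith
      · omega
    | succ i =>
      obtain ⟨h₁, h₂⟩ := ih (Fin.tail m) (Fin.tail m') i (K + R) hi
        (fun c hc => hup c.succ (Fin.succ_lt_succ_iff.2 hc))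
        (fun c hc => hdown c.succ (Fin.succ_lt_succ_iff.2 hc))
        (by rw [← sum_filter_succ_le_eq_sum_tail]; simp only [Fin.val_succ] at hK; linarith)
      have h0 := hdown 0 i.succ_pos
      rw [pot_succ, pot_succ, potStep, potStep]
      set st := pot W (Fin.tail m)
      set st' := pot W (Fin.tail m')
      have hn : m' 0 + st'.1 + K ≤ m 0 + st.1 := by omega
      have hWn := Nat.mul_le_mul (show m' 0 + st'.1 ≤ m 0 + st.1 by omega)
        (hW (show st'.2 + (m' 0 + st'.1) ≤ st.2 + (m 0 + st.1) by omega))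
      exact ⟨by omega, by omega⟩

lemma pot_snd_lt_of_move (hW : Monotone W) {d : ℕ} (m m' : Fin d → ℕ) (i : Fin d) (R : ℕ)
    (hi : m' i + 1 = m i) (hup : ∀ c, i < c → m' c = m c)
    (hdown : ∀ c, c < i → m' c ≤ m c + R)
    (hR : d * R ≤ W (∑ c ∈ univ.filter (fun c => i ≤ c), m c)) :
    (pot W m').2 < (pot W m).2 :=
  (pot_fst_add_le_and_snd_lt hW m m' i R 0 hi hup hdown
    (by rw [zero_add]; exact (Nat.mul_le_mul_right R i.isLt.le).trans hR)).2

lemma potStep_fst_add_snd_add_le (A B t : ℕ) (st : ℕ × ℕ) (m : ℕ) :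
    (potStep (fun x => A * (x + t) ^ B) st m).1 + (potStep (fun x => A * (x + t) ^ B) st m).2 + t ≤
      (A + 2) * (st.1 + st.2 + t + m) ^ (B + 1) := by
  set Y := st.1 + st.2 + t + m with hYdef
  have hW : (m + st.1) * (A * (st.2 + (m + st.1) + t) ^ B) ≤ A * Y ^ (B + 1) :=
    calc _ ≤ Y * (A * Y ^ B) :=
          Nat.mul_le_mul (by omega) (Nat.mul_le_mul_left _ (Nat.pow_le_pow_left (by omega) _))
      _ = A * Y ^ (B + 1) := by ring
  have hY : Y ≤ Y ^ (B + 1) := Nat.le_self_pow (by omega) _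
  simp only [potStep]
  linarith

lemma mul_pow_succ_le_of_le_pow {M X Y E B : ℕ} (hY : Y ≤ (M * X) ^ E) (hE : E ≠ 0) :
    M * Y ^ (B + 1) ≤ (M * X) ^ (E * (B + 2)) := by
  rcases Nat.eq_zero_or_pos X with rfl | hX
  · rw [mul_zero, zero_pow hE, Nat.le_zero] at hY
    simp [hY]
  calc M * Y ^ (B + 1) ≤ (M * X) * ((M * X) ^ E) ^ (B + 1) :=
        Nat.mul_le_mul (Nat.le_mul_of_pos_right M hX) (Nat.pow_le_pow_left hY _)
    _ = (M * X) ^ (1 + E * (B + 1)) := by ring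
    _ ≤ (M * X) ^ (E * (B + 2)) := by
        rcases Nat.eq_zero_or_pos M with rfl | hM
        · simp [hE]
        refine Nat.pow_le_pow_right (Nat.mul_pos hM hX) ?_
        have : 1 ≤ E := Nat.one_le_iff_ne_zero.2 hE
        nlinarith

lemma pot_le_pow (A B t : ℕ) {d : ℕ} (m : Fin d → ℕ) :
    (pot (fun x => A * (x + t) ^ B) m).1 + (pot (fun x => A * (x + t) ^ B) m).2 + t ≤
      ((A + 2) * (∑ c, m c + t)) ^ ((B + 2) ^ d) := by
  induction d with
  | zero => simpa [pot] using Nat.le_mul_of_pos_left t (by omega)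
  | succ d ih =>
    have ih' := ih (Fin.tail m)
    set st := pot (fun x => A * (x + t) ^ B) (Fin.tail m)
    set E := (B + 2) ^ d
    have hE : E ≠ 0 := by positivity
    have hm : m 0 ≤ ((A + 2) * m 0) ^ E :=
      (Nat.le_mul_of_pos_left _ (by omega)).trans (Nat.le_self_pow hE _)
    have hY : st.1 + st.2 + t + m 0 ≤ ((A + 2) * (∑ c, m c + t)) ^ E :=
      calc _ ≤ ((A + 2) * (∑ c, Fin.tail m c + t)) ^ E + ((A + 2) * m 0) ^ E := by omega
        _ ≤ ((A + 2) * (∑ c, Fin.tail m c + t) + (A + 2) * m 0) ^ E :=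
            pow_add_pow_le (by positivity) (by positivity) hE
        _ = ((A + 2) * (∑ c, m c + t)) ^ E := by rw [Fin.sum_univ_succ]; simp only [Fin.tail]; ring_nf
    rw [pot_succ, pow_succ]
    exact (potStep_fst_add_snd_add_le A B t st (m 0)).trans (mul_pow_succ_le_of_le_pow hY hE)

end Potential

section Algebra

variable {k S : Type*} [Field k] [CommRing S] [Algebra k S] {𝒜 : ℕ → Submodule k S}

/-- Only the products of total degree `e` survive in the degree-`e` component. -/
theorem GRankLE.exists_factors_mem_span [GradedAlgebra 𝒜] {F : S} {e r : ℕ} (hF : F ∈ 𝒜 e)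
    (h : GRankLE 𝒜 F r) :
    ∃ P : List S, P.length ≤ r ∧ (∀ x ∈ P, ∃ a, 0 < a ∧ a < e ∧ x ∈ 𝒜 a) ∧
      F ∈ Ideal.span {x | x ∈ P} := by
  classical
  obtain ⟨g, h, hg, hh, rfl⟩ := h
  choose a ha hga using hg
  choose b hb hhb using hh
  refine ⟨((List.finRange r).filter fun m => a m < e).map g, ?_, ?_, ?_⟩
  · rw [List.length_map]
    exact (List.length_filter_le _ _).trans_eq (List.length_finRange)
  · simp only [List.mem_map, List.mem_filter, List.mem_finRange, true_and, decide_eq_true_eq]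
    rintro _ ⟨m, hm, rfl⟩
    exact ⟨a m, ha m, hm, hga m⟩
  · rw [← DirectSum.decompose_of_mem_same 𝒜 hF, ← GradedRing.proj_apply, map_sum]
    refine Ideal.sum_mem _ fun m _ => ?_
    have hgh := SetLike.mul_mem_graded (hga m) (hhb m)
    rw [GradedRing.proj_apply]
    by_cases hm : a m + b m = e
    · rw [← hm, DirectSum.decompose_of_mem_same 𝒜 hgh]
      refine Ideal.mul_mem_right _ _ (Ideal.subset_span (List.mem_map.2 ⟨m, ?_, rfl⟩))
      simpa using hb m
    · rw [DirectSum.decompose_of_mem_ne 𝒜 hgh hm]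
      exact zero_mem _

theorem mem_of_sum_algebraMap_mul_mem {ι : Type*} [Fintype ι] {J : Ideal S} {a : ι → k}
    {x : ι → S} {j₀ : ι} (ha : a j₀ ≠ 0) (hsum : ∑ j, algebraMap k S (a j) * x j ∈ J)
    (hx : ∀ j ≠ j₀, x j ∈ J) : x j₀ ∈ J := by
  classical
  rw [← Finset.add_sum_erase _ _ (mem_univ j₀)] at hsum
  have hj₀ := (J.add_mem_iff_left (J.sum_mem fun j hj =>
    J.mul_mem_left _ (hx j (ne_of_mem_erase hj)))).1 hsum
  simpa [← mul_assoc, ← map_mul, ha] using J.mul_mem_left (algebraMap k S (a j₀)⁻¹) hj₀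

variable (𝒜)

def LayersHomogeneous {d : ℕ} (L : Fin d → List S) : Prop :=
  ∀ c, ∀ x ∈ L c, x ∈ 𝒜 (c + 1)

open Classical in
noncomputable def replaceByFactors {d : ℕ} (L : Fin d → List S) (i : Fin d) (j : ℕ) (P : List S) :
    Fin d → List S := fun c =>
  if c < i then L c ++ P.filter (· ∈ 𝒜 (c + 1)) else if c = i then (L i).eraseIdx j else L c

variable {𝒜} {d : ℕ} {L : Fin d → List S} {i : Fin d} {j : ℕ} {P : List S}

lemma mem_replaceByFactors_of_lt {c : Fin d} {x : S} (hc : c < i) :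
    x ∈ replaceByFactors 𝒜 L i j P c ↔ x ∈ L c ∨ x ∈ P ∧ x ∈ 𝒜 (c + 1) := by
  simp [replaceByFactors, hc]

lemma length_replaceByFactors_of_lt {c : Fin d} (hc : c < i) :
    (replaceByFactors 𝒜 L i j P c).length ≤ (L c).length + P.length := by
  simpa [replaceByFactors, hc] using List.length_filter_le _ _

lemma replaceByFactors_self : replaceByFactors 𝒜 L i j P i = (L i).eraseIdx j := by
  simp [replaceByFactors]

lemma replaceByFactors_of_gt {c : Fin d} (hc : i < c) : replaceByFactors 𝒜 L i j P c = L c := by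
  simp [replaceByFactors, hc.ne', hc.not_gt]

lemma mem_replaceByFactors_of_ne {c : Fin d} {x : S} (hc : c ≠ i) (hx : x ∈ L c) :
    x ∈ replaceByFactors 𝒜 L i j P c := by
  rcases hc.lt_or_gt with hc | hc
  · exact (mem_replaceByFactors_of_lt hc).2 (Or.inl hx)
  · rwa [replaceByFactors_of_gt hc]

lemma mem_replaceByFactors_of_mem {x : S} {a : ℕ} (hx : x ∈ P) (ha : 0 < a) (hai : a < (i : ℕ) + 1)
    (hxa : x ∈ 𝒜 a) : x ∈ replaceByFactors 𝒜 L i j P ⟨a - 1, by omega⟩ := by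
  refine (mem_replaceByFactors_of_lt (Fin.lt_def.2 (by simp only; omega))).2 (Or.inr ⟨hx, ?_⟩)
  simpa [Nat.sub_add_cancel ha] using hxa

lemma LayersHomogeneous.replaceByFactors (hL : LayersHomogeneous 𝒜 L) :
    LayersHomogeneous 𝒜 (replaceByFactors 𝒜 L i j P) := by
  intro c x hx
  rcases lt_trichotomy c i with hc | rfl | hc
  · exact ((mem_replaceByFactors_of_lt hc).1 hx).elim (hL c x) And.right
  · rw [replaceByFactors_self] at hx
    exact hL c x ((List.eraseIdx_sublist _ _).subset hx)
  · rw [replaceByFactors_of_gt hc] at hx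
    exact hL c x hx

lemma span_le_span_replaceByFactors (hj : ∀ h : j < (L i).length,
      (L i)[j] ∈ Ideal.span {x | ∃ c, x ∈ replaceByFactors 𝒜 L i j P c}) :
    Ideal.span {x | ∃ c, x ∈ L c} ≤ Ideal.span {x | ∃ c, x ∈ replaceByFactors 𝒜 L i j P c} := by
  refine Ideal.span_le.2 ?_
  rintro x ⟨c, hx⟩
  by_cases hc : c = i
  · subst hc
    obtain ⟨j', hj', rfl⟩ := List.getElem_of_mem hx
    by_cases hjj : j' = j
    · subst hjj; exact hj hj'
    · refine Ideal.subset_span ⟨c, ?_⟩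
      rw [replaceByFactors_self]
      exact List.mem_eraseIdx_iff_getElem.2 ⟨j', hj', hjj, rfl⟩
  · exact Ideal.subset_span ⟨c, mem_replaceByFactors_of_ne hc hx⟩

variable (A B t : ℕ)

theorem exists_move_of_not_regular (hL : LayersHomogeneous 𝒜 L) [GradedAlgebra 𝒜]
    (hreg : ¬ GTowerRegular 𝒜 (fun c : Fin d => (c : ℕ) + 1) (fun c => (L c).length)
      (fun c j => (L c)[j]) A B t) :
    ∃ (i : Fin d) (j : Fin (L i).length) (P : List S),
      P.length ≤ A * (∑ c ∈ univ.filter (fun c => i ≤ c), (L c).length + t) ^ B ∧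
      (∀ x ∈ P, ∃ a, 0 < a ∧ a < (i : ℕ) + 1 ∧ x ∈ 𝒜 a) ∧
      (L i)[j] ∈ Ideal.span {x | ∃ c, x ∈ replaceByFactors 𝒜 L i j P c} := by
  simp only [GTowerRegular, not_forall, not_not] at hreg
  obtain ⟨i, a, ha, q, hqI, hqA, hrk⟩ := hreg
  have hf : ∑ j, algebraMap k S (a j) * (L i)[j] ∈ 𝒜 (i + 1) :=
    Submodule.sum_mem _ fun j _ => by
      rw [← Algebra.smul_def]; exact Submodule.smul_mem _ _ (hL i _ (List.getElem_mem _))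
  obtain ⟨P, hPlen, hPdeg, hPspan⟩ := hrk.exists_factors_mem_span (Submodule.add_mem _ hf hqA)
  obtain ⟨j, hj⟩ := Function.ne_iff.1 ha
  refine ⟨i, j, P, hPlen, hPdeg, ?_⟩
  set J := Ideal.span {x | ∃ c, x ∈ replaceByFactors 𝒜 L i j P c}
  have hPJ : Ideal.span {x | x ∈ P} ≤ J := Ideal.span_le.2 fun x hx => by
    obtain ⟨a, ha, hai, hxa⟩ := hPdeg x hx
    exact Ideal.subset_span ⟨_, mem_replaceByFactors_of_mem hx ha hai hxa⟩
  have hqJ : q ∈ J := by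
    refine Ideal.span_le.2 ?_ hqI
    rintro _ ⟨c, j', hc, rfl⟩
    exact Ideal.subset_span ⟨c, mem_replaceByFactors_of_ne hc.ne (List.getElem_mem _)⟩
  refine mem_of_sum_algebraMap_mul_mem hj (by simpa using J.sub_mem (hPJ hPspan) hqJ)
    fun j' hj' => Ideal.subset_span ⟨i, ?_⟩
  rw [replaceByFactors_self]
  exact List.mem_eraseIdx_iff_getElem.2 ⟨j', j'.isLt, Fin.val_ne_of_ne hj', rfl⟩

theorem exists_regular_of_layersHomogeneous [GradedAlgebra 𝒜] (L : Fin d → List S)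
    (hL : LayersHomogeneous 𝒜 L) :
    ∃ L' : Fin d → List S, LayersHomogeneous 𝒜 L' ∧
      Ideal.span {x | ∃ c, x ∈ L c} ≤ Ideal.span {x | ∃ c, x ∈ L' c} ∧
      GTowerRegular 𝒜 (fun c : Fin d => (c : ℕ) + 1) (fun c => (L' c).length)
        (fun c j => (L' c)[j]) A B t ∧
      (pot (fun x => d * A * (x + t) ^ B) fun c => (L' c).length).2 ≤
        (pot (fun x => d * A * (x + t) ^ B) fun c => (L c).length).2 := by
  induction hn : (pot (fun x => d * A * (x + t) ^ B) fun c => (L c).length).2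
    using Nat.strong_induction_on generalizing L with
  | _ n ih =>
  by_cases hreg : GTowerRegular 𝒜 (fun c : Fin d => (c : ℕ) + 1) (fun c => (L c).length)
      (fun c j => (L c)[j]) A B t
  · exact ⟨L, hL, le_rfl, hreg, hn.le⟩
  obtain ⟨i, j, P, hPlen, hPdeg, hj⟩ := exists_move_of_not_regular A B t hL hreg
  have hlt := pot_snd_lt_of_move (W := fun x => d * A * (x + t) ^ B)
    (fun x y hxy => Nat.mul_le_mul_left _ (Nat.pow_le_pow_left (by omega) _)) _
    (fun c => (replaceByFactors 𝒜 L i j P c).length) i _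
    (by rw [replaceByFactors_self]; exact List.length_eraseIdx_add_one j.isLt)
    (fun c hc => by rw [replaceByFactors_of_gt hc])
    (fun c hc => (length_replaceByFactors_of_lt hc).trans (Nat.add_le_add_left hPlen _))
    (mul_assoc _ _ _).ge
  obtain ⟨L', hL', hspan, hreg', hpot⟩ := ih _ (hn ▸ hlt) _ hL.replaceByFactors rfl
  exact ⟨L', hL', (span_le_span_replaceByFactors fun _ => hj).trans hspan, hreg',
    hpot.trans (hn ▸ hlt).le⟩

theorem exists_layers_of_degree_le [GradedAlgebra 𝒜] {s : ℕ} (g : Fin s → S)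
    (hg : ∀ j, ∃ e, 0 < e ∧ e ≤ d ∧ g j ∈ 𝒜 e) :
    ∃ L : Fin d → List S, LayersHomogeneous 𝒜 L ∧
      Ideal.span (Set.range g) ≤ Ideal.span {x | ∃ c, x ∈ L c} ∧ ∑ c, (L c).length ≤ d * s := by
  classical
  refine ⟨fun c => (List.ofFn g).filter (· ∈ 𝒜 (c + 1)),
    fun c x hx => by simpa using (List.mem_filter.1 hx).2, Ideal.span_le.2 ?_, ?_⟩
  · rintro _ ⟨j, rfl⟩
    obtain ⟨e, he, hed, hge⟩ := hg j
    refine Ideal.subset_span ⟨⟨e - 1, by omega⟩, List.mem_filter.2 ⟨List.mem_ofFn.2 ⟨j, rfl⟩, ?_⟩⟩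
    simpa [Nat.sub_add_cancel he] using hge
  · calc _ ≤ ∑ _c : Fin d, s :=
          sum_le_sum fun c _ => (List.length_filter_le _ _).trans_eq List.length_ofFn
      _ = d * s := by simp

end Algebra

theorem relative_regularization.{u, v} (A B d : ℕ) :
    ∃ C D : ℕ,
      ∀ (k : Type u) [Field k] (S : Type v) [CommRing S] [Algebra k S]
        (𝒜 : ℕ → Submodule k S), ∀ [GradedAlgebra 𝒜],
        𝒜 0 = (1 : Submodule k S) →
        ∀ (s t : ℕ) (g : Fin s → S),
          (∀ j, ∃ e : ℕ, 0 < e ∧ e ≤ d ∧ g j ∈ 𝒜 e) →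
          ∃ (h : ℕ) (degs sz : Fin h → ℕ) (G : (i : Fin h) → Fin (sz i) → S),
            StrictMono degs ∧
            (∀ i, 0 < degs i ∧ degs i ≤ d) ∧
            (∀ i j, G i j ∈ 𝒜 (degs i)) ∧
            Ideal.span (Set.range g) ≤
              Ideal.span {p | ∃ (i : Fin h) (j : Fin (sz i)), p = G i j} ∧
            GTowerRegular 𝒜 degs sz G A B t ∧
            (∑ i, sz i) ≤ C * (s + t) ^ D := by
  classical
  refine ⟨((d * A + 2) * (d + 1)) ^ (B + 2) ^ d, (B + 2) ^ d, ?_⟩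
  intro k _ S _ _ 𝒜 _ _ s t g hg
  obtain ⟨L₀, hL₀, hspan₀, hL₀s⟩ := exists_layers_of_degree_le g hg
  obtain ⟨L, hL, hspan, hreg, hpot⟩ := exists_regular_of_layersHomogeneous A B t L₀ hL₀
  refine ⟨d, fun c => c + 1, fun c => (L c).length, fun c j => (L c)[j],
    fun _ _ h => Nat.succ_lt_succ h, fun c => ⟨c.succ_pos, c.isLt⟩,
    fun c j => hL c _ (List.getElem_mem _), ?_, hreg, ?_⟩
  · refine hspan₀.trans (hspan.trans (Ideal.span_mono ?_))
    rintro x ⟨c, hx⟩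
    obtain ⟨j, hj, rfl⟩ := List.getElem_of_mem hx
    exact ⟨c, ⟨j, hj⟩, rfl⟩
  · calc ∑ c, (L c).length ≤ _ := sum_le_pot_snd _
      _ ≤ _ := hpot
      _ ≤ ((d * A + 2) * (∑ c, (L₀ c).length + t)) ^ (B + 2) ^ d := by
          have := pot_le_pow (d * A) B t fun c => (L₀ c).length
          omega
      _ ≤ ((d * A + 2) * ((d + 1) * (s + t))) ^ (B + 2) ^ d := by gcongr; nlinarith
      _ = _ := by rw [← mul_pow]; ring
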